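/- arXiv:1510.01191 — 3 statements merged into one kernel-verified Lean document; each statement's English description precedes it below -/
import Mathlib

section
/- Let $k$ be an algebraically closed field of characteristic zero and let $R_1, R_2$ be quadratic forms in $m$ variables over $k$ forming a nonsingular system (i.e., $\nabla R_1(x)$ and $\nabla R_2(x)$ are linearly independent for every nonzero $x$ with $R_1(x)=R_2(x)=0$). Then every non-trivial linear combination $aR_1+bR_2$ (with $(a,b)\neq(0,0)$) has rank at least $m-1$. -/
open Matrix

/-- On the span of two linearly independent vectors over an algebraically closed field,
every quadratic form `v ⬝ᵥ (C *ᵥ v)` has a nontrivial zero. -/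
lemma exists_isotropic_combination {k : Type*} [Field k] [IsAlgClosed k] {m : ℕ}
    (C : Matrix (Fin m) (Fin m) k) (x y : Fin m → k) :
    ∃ s t : k, ¬(s = 0 ∧ t = 0) ∧
      (s • x + t • y) ⬝ᵥ (C *ᵥ (s • x + t • y)) = 0 := by
  set qx := x ⬝ᵥ (C *ᵥ x) with hqx
  set qy := y ⬝ᵥ (C *ᵥ y) with hqy
  set c := x ⬝ᵥ (C *ᵥ y) + y ⬝ᵥ (C *ᵥ x) with hc
  have expand : ∀ s t : k, (s • x + t • y) ⬝ᵥ (C *ᵥ (s • x + t • y))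
      = qy * t ^ 2 + c * t * s + qx * s ^ 2 := by
    intro s t
    simp only [mulVec_add, mulVec_smul, dotProduct_add, dotProduct_smul, add_dotProduct,
      smul_dotProduct, smul_eq_mul, hqx, hqy, hc]
    ring
  by_cases hy : qy = 0
  · exact ⟨0, 1, by simp, by rw [expand]; simp [hy]⟩
  · have hdeg : (Polynomial.C qy * Polynomial.X ^ 2 + Polynomial.C c * Polynomial.X
        + Polynomial.C qx).degree = 2 := Polynomial.degree_quadratic hy
    obtain ⟨t, ht⟩ := IsAlgClosed.exists_root _ (by rw [hdeg]; exact two_ne_zero)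
    refine ⟨1, t, by simp, ?_⟩
    rw [expand]
    have := ht
    rw [Polynomial.IsRoot.def] at this
    simp only [Polynomial.eval_add, Polynomial.eval_mul, Polynomial.eval_pow,
      Polynomial.eval_C, Polynomial.eval_X] at this
    rw [← this]; ring

/-- Lemma 1 (first part): for a nonsingular system of two quadratic forms over an
algebraically closed field of characteristic zero, every nontrivial linear combination
has rank at least `m - 1`. Quadratic forms are identified with symmetric matrices,
with `R(x) = xᵀAx` and gradient proportional to `A *ᵥ x`. -/
theorem rank_smul_add_smul_ge_of_nonsingular_pair
    {k : Type*} [Field k] [IsAlgClosed k] [CharZero k] {m : ℕ}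
    (A₁ A₂ : Matrix (Fin m) (Fin m) k) (hA₁ : A₁.IsSymm) (hA₂ : A₂.IsSymm)
    (hns : ∀ x : Fin m → k, x ≠ 0 → x ⬝ᵥ (A₁ *ᵥ x) = 0 → x ⬝ᵥ (A₂ *ᵥ x) = 0 →
      LinearIndependent k ![A₁ *ᵥ x, A₂ *ᵥ x])
    (a b : k) (hab : (a, b) ≠ (0, 0)) :
    m - 1 ≤ (a • A₁ + b • A₂).rank := by
  by_contra hlt
  push_neg at hlt
  set B := a • A₁ + b • A₂ with hB
  have hab' : ¬(a = 0 ∧ b = 0) := by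
    intro ⟨h1, h2⟩; exact hab (by simp [h1, h2])
  -- kernel dimension ≥ 2
  have hrn := LinearMap.finrank_range_add_finrank_ker B.mulVecLin
  rw [Module.finrank_fintype_fun_eq_card, Fintype.card_fin] at hrn
  have hrank : B.rank = Module.finrank k (LinearMap.range B.mulVecLin) := rfl
  have hker : 2 ≤ Module.finrank k (LinearMap.ker B.mulVecLin) := by omega
  obtain ⟨f, hf⟩ := exists_linearIndependent_of_le_finrank hker
  set x : Fin m → k := (f 0 : Fin m → k) with hxdef
  set y : Fin m → k := (f 1 : Fin m → k) with hydef
  have hfx : B *ᵥ x = 0 := by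
    have := (f 0).2
    rwa [LinearMap.mem_ker, Matrix.mulVecLin_apply] at this
  have hfy : B *ᵥ y = 0 := by
    have := (f 1).2
    rwa [LinearMap.mem_ker, Matrix.mulVecLin_apply] at this
  have hxy : LinearIndependent k ![x, y] := by
    have hmap := hf.map' (LinearMap.ker B.mulVecLin).subtype
      (Submodule.ker_subtype _)
    have : ![x, y] = (LinearMap.ker B.mulVecLin).subtype ∘ f := by
      ext i j; fin_cases i <;> rfl
    rw [this]; exact hmap
  -- helper: for any z killed by B, conclude things
  have key : ∀ s t : k, ¬(s = 0 ∧ t = 0) → B *ᵥ (s • x + t • y) = 0 := by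
    intro s t _
    rw [mulVec_add, mulVec_smul, mulVec_smul, hfx, hfy, smul_zero, smul_zero, add_zero]
  by_cases hb : b = 0
  · -- then a ≠ 0 and A₁ *ᵥ z = 0 for kernel vectors z
    have ha : a ≠ 0 := by intro h0; exact hab' ⟨h0, hb⟩
    obtain ⟨s, t, hst, hiso⟩ := exists_isotropic_combination A₂ x y
    set z := s • x + t • y with hzdef
    have hz0 : z ≠ 0 := by
      intro h0
      exact hst (LinearIndependent.pair_iff.mp hxy s t h0)
    have hA1z : A₁ *ᵥ z = 0 := by
      have h1 := key s t hst
      rw [hB, hb] at h1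
      simp only [zero_smul, add_zero, smul_mulVec] at h1
      exact (smul_eq_zero.mp h1).resolve_left ha
    have hR1 : z ⬝ᵥ (A₁ *ᵥ z) = 0 := by rw [hA1z, dotProduct_zero]
    have hli := hns z hz0 hR1 hiso
    exact hli.ne_zero 0 (by simpa using hA1z)
  · obtain ⟨s, t, hst, hiso⟩ := exists_isotropic_combination A₁ x y
    set z := s • x + t • y with hzdef
    have hz0 : z ≠ 0 := by
      intro h0
      exact hst (LinearIndependent.pair_iff.mp hxy s t h0)
    have hBz : B *ᵥ z = 0 := key s t hst
    have hcomb : a • (A₁ *ᵥ z) + b • (A₂ *ᵥ z) = 0 := by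
      rw [← smul_mulVec, ← smul_mulVec, ← add_mulVec]
      exact hBz
    have hR2 : z ⬝ᵥ (A₂ *ᵥ z) = 0 := by
      have h2 : z ⬝ᵥ (B *ᵥ z) = 0 := by rw [hBz, dotProduct_zero]
      rw [hB, add_mulVec, smul_mulVec, smul_mulVec, dotProduct_add,
        dotProduct_smul, dotProduct_smul, smul_eq_mul, smul_eq_mul, hiso,
        mul_zero, zero_add] at h2
      exact (mul_eq_zero.mp h2).resolve_left hb
    have hli := hns z hz0 hiso hR2
    obtain ⟨-, hb0⟩ := LinearIndependent.pair_iff.mp hli a b hcomb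
    exact hb hb0
end

section
/- Let $k$ be an algebraically closed field of characteristic zero and let $R_1,R_2$ be quadratic forms in $m$ variables over $k$ such that $\det(XR_1+YR_2)$ is a nonzero binary form with distinct linear factors over $k$. Then $(R_1,R_2)$ is a nonsingular system: for every nonzero $x\in k^m$ with $R_1(x)=R_2(x)=0$, the gradients $\nabla R_1(x)$ and $\nabla R_2(x)$ are linearly independent. -/
/-!
Suppose `s • A₁ x + t • A₂ x = 0` with `(s, t) ≠ 0`. Then `A₁ x = t • u` and `A₂ x = -s • u` for
some `u`, and `x ⬝ᵥ u = 0` because `x` is a common zero. Hence the pencil `N = X • A₁ + Y • A₂`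
satisfies `N x = ℓ • u` and `xᵀ N = ℓ • uᵀ` for the linear form `ℓ = t X - s Y`. Cramer's rule,
applied to `N` and then to the transpose of `N` with a column replaced by `u`, extracts one factor
`ℓ` each time, so `ℓ² ∣ det N`. Since `ℓ` vanishes at `(s, t)` it is not a unit, so `det N` is not
squarefree.
-/

open Matrix MvPolynomial

/-- The binary form `det (X·A₁ + Y·A₂)` attached to a pencil of quadratic forms,
as a polynomial in the two variables `X = X 0`, `Y = X 1`. -/
noncomputable def pencilDet {k : Type*} [CommRing k] {m : ℕ}
    (A₁ A₂ : Matrix (Fin m) (Fin m) k) : MvPolynomial (Fin 2) k :=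
  Matrix.det
    (((X (0 : Fin 2) : MvPolynomial (Fin 2) k) • A₁.map C
      + (X (1 : Fin 2) : MvPolynomial (Fin 2) k) • A₂.map C :
        Matrix (Fin m) (Fin m) (MvPolynomial (Fin 2) k)))

namespace Matrix

variable {n R : Type*} [Fintype n] [DecidableEq n] [CommRing R]

theorem det_mul_apply_eq_of_mulVec_eq_smul {N : Matrix n n R} {v w : n → R} {p : R}
    (h : N *ᵥ v = p • w) (i : n) : N.det * v i = p * (N.updateCol i w).det := by
  have hcramer : cramer N (N *ᵥ v) = N.det • v := by
    rw [cramer_eq_adjugate_mulVec, mulVec_mulVec, adjugate_mul, smul_mulVec, one_mulVec]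
  rw [h, map_smul] at hcramer
  simpa [cramer_apply, mul_comm] using (congrFun hcramer i).symm

theorem mul_self_dvd_det_of_mulVec_eq_smul {N : Matrix n n R} {v w : n → R} {p : R} {i : n}
    (hv : IsUnit (v i)) (hcol : N *ᵥ v = p • w) (hrow : v ᵥ* N = p • w)
    (hvw : v ⬝ᵥ w = 0) : p * p ∣ N.det := by
  have hrow' : (N.updateCol i w)ᵀ *ᵥ v = p • Function.update w i 0 := by
    rw [mulVec_transpose, vecMul_updateCol, hrow, hvw, ← smul_zero p, Function.update_smul,
      smul_zero]
  have h₁ := det_mul_apply_eq_of_mulVec_eq_smul hcol i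
  have h₂ := det_mul_apply_eq_of_mulVec_eq_smul hrow' i
  rw [det_transpose] at h₂
  rw [← (hv.mul hv).dvd_mul_right, ← mul_assoc, h₁, mul_assoc, h₂, ← mul_assoc]
  exact dvd_mul_right _ _

end Matrix

theorem exists_eq_smul_of_smul_add_smul_eq_zero {K V : Type*} [Field K] [AddCommGroup V]
    [Module K V] {a b : V} {s t : K} (h : s • a + t • b = 0) (hst : s ≠ 0 ∨ t ≠ 0) :
    ∃ u, a = t • u ∧ b = -s • u := by
  rcases eq_or_ne t 0 with rfl | ht
  · have hs := hst.resolve_right (not_not.mpr rfl)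
    refine ⟨-s⁻¹ • b, ?_, ?_⟩
    · simpa [hs] using h
    · rw [smul_smul, neg_mul_neg, mul_inv_cancel₀ hs, one_smul]
  · refine ⟨t⁻¹ • a, by rw [smul_smul, mul_inv_cancel₀ ht, one_smul], ?_⟩
    calc b = t⁻¹ • (t • b) := (inv_smul_smul₀ ht b).symm
      _ = t⁻¹ • -(s • a) := by rw [neg_eq_of_add_eq_zero_right h]
      _ = -s • t⁻¹ • a := by rw [smul_neg, neg_smul, smul_comm]

section Pencil

variable {k : Type*} [CommRing k] {m : ℕ}

noncomputable def pencil (A₁ A₂ : Matrix (Fin m) (Fin m) k) :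
    Matrix (Fin m) (Fin m) (MvPolynomial (Fin 2) k) :=
  (X 0 : MvPolynomial (Fin 2) k) • A₁.map C + (X 1 : MvPolynomial (Fin 2) k) • A₂.map C

theorem pencilDet_eq_det_pencil (A₁ A₂ : Matrix (Fin m) (Fin m) k) :
    pencilDet A₁ A₂ = (pencil A₁ A₂).det := rfl

theorem pencil_isSymm {A₁ A₂ : Matrix (Fin m) (Fin m) k} (h₁ : A₁.IsSymm)
    (h₂ : A₂.IsSymm) : (pencil A₁ A₂).IsSymm := by
  rw [IsSymm, pencil, transpose_add, transpose_smul, transpose_smul, ← transpose_map,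
    ← transpose_map, h₁.eq, h₂.eq]

theorem pencil_mulVec_comp_C {A₁ A₂ : Matrix (Fin m) (Fin m) k} {x u : Fin m → k} {s t : k}
    (h₁ : A₁ *ᵥ x = t • u) (h₂ : A₂ *ᵥ x = -s • u) :
    pencil A₁ A₂ *ᵥ (C ∘ x) = (C t * X 0 - C s * X 1 : MvPolynomial (Fin 2) k) • (C ∘ u) := by
  funext j
  have h₁j := congrFun h₁ j
  have h₂j := congrFun h₂ j
  simp only [Pi.smul_apply, smul_eq_mul] at h₁j h₂j
  simp only [pencil, add_mulVec, smul_mulVec, Pi.add_apply, Pi.smul_apply, smul_eq_mul,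
    ← RingHom.map_mulVec, Function.comp_apply, h₁j, h₂j, C_mul, C_neg]
  ring

theorem not_isUnit_C_mul_X_sub_C_mul_X [Nontrivial k] (s t : k) :
    ¬IsUnit (C t * X 0 - C s * X 1 : MvPolynomial (Fin 2) k) := fun h => by
  simpa [mul_comm] using h.map (eval ![s, t])

end Pencil

theorem mul_self_dvd_pencilDet {k : Type*} [Field k] {m : ℕ}
    {A₁ A₂ : Matrix (Fin m) (Fin m) k} (hA₁ : A₁.IsSymm) (hA₂ : A₂.IsSymm)
    {x u : Fin m → k} {s t : k} (hx : x ≠ 0)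
    (h₁ : A₁ *ᵥ x = t • u) (h₂ : A₂ *ᵥ x = -s • u) (hxu : x ⬝ᵥ u = 0) :
    (C t * X 0 - C s * X 1) * (C t * X 0 - C s * X 1) ∣ pencilDet A₁ A₂ := by
  obtain ⟨i, hi⟩ := Function.ne_iff.mp hx
  have hcol := pencil_mulVec_comp_C h₁ h₂
  have hrow : (C ∘ x) ᵥ* pencil A₁ A₂ =
      (C t * X 0 - C s * X 1 : MvPolynomial (Fin 2) k) • (C ∘ u) := by
    rw [← mulVec_transpose, (pencil_isSymm hA₁ hA₂).eq, hcol]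
  rw [pencilDet_eq_det_pencil]
  refine mul_self_dvd_det_of_mulVec_eq_smul ((isUnit_iff_ne_zero.mpr hi).map C) hcol hrow ?_
  rw [← RingHom.map_dotProduct, hxu, map_zero]

theorem nonsingular_pair_of_det_pencil_squarefree_general
    {k : Type*} [Field k] {m : ℕ}
    (A₁ A₂ : Matrix (Fin m) (Fin m) k) (hA₁ : A₁.IsSymm) (hA₂ : A₂.IsSymm)
    (hsf : Squarefree (pencilDet A₁ A₂)) :
    ∀ x : Fin m → k, x ≠ 0 → x ⬝ᵥ (A₁ *ᵥ x) = 0 → x ⬝ᵥ (A₂ *ᵥ x) = 0 →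
      LinearIndependent k ![A₁ *ᵥ x, A₂ *ᵥ x] := by
  intro x hx hq₁ hq₂
  rw [LinearIndependent.pair_iff]
  intro s t hst
  by_contra hst₀
  rw [not_and_or] at hst₀
  obtain ⟨u, hu₁, hu₂⟩ := exists_eq_smul_of_smul_add_smul_eq_zero hst hst₀
  rw [hu₁, dotProduct_smul, smul_eq_mul] at hq₁
  rw [hu₂, dotProduct_smul, smul_eq_mul] at hq₂
  have hxu : x ⬝ᵥ u = 0 := hst₀.elim (fun hs => by simpa [hs] using hq₂)
    (fun ht => by simpa [ht] using hq₁)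
  exact not_isUnit_C_mul_X_sub_C_mul_X s t
    (hsf _ (mul_self_dvd_pencilDet hA₁ hA₂ hx hu₁ hu₂ hxu))

/-- Lemma 1 (converse part): if `det (X·R₁ + Y·R₂)` is a nonzero squarefree binary form,
then `(R₁, R₂)` is a nonsingular system: at every nonzero common zero the gradients
`A₁ *ᵥ x`, `A₂ *ᵥ x` are linearly independent. -/
theorem nonsingular_pair_of_det_pencil_squarefree
    {k : Type*} [Field k] [IsAlgClosed k] [CharZero k] {m : ℕ}
    (A₁ A₂ : Matrix (Fin m) (Fin m) k) (hA₁ : A₁.IsSymm) (hA₂ : A₂.IsSymm)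
    (hne : pencilDet A₁ A₂ ≠ 0) (hsf : Squarefree (pencilDet A₁ A₂)) :
    ∀ x : Fin m → k, x ≠ 0 → x ⬝ᵥ (A₁ *ᵥ x) = 0 → x ⬝ᵥ (A₂ *ᵥ x) = 0 →
      LinearIndependent k ![A₁ *ᵥ x, A₂ *ᵥ x] :=
  nonsingular_pair_of_det_pencil_squarefree_general A₁ A₂ hA₁ hA₂ hsf
end

section
/- Let $Q_1,Q_2,Q_3$ be a nonsingular system of three quadratic forms in $n$ variables over an algebraically closed field $k$ of characteristic zero, defining the variety $\mathcal{R}: Q_1=Q_2=Q_3=0$ in $\mathbb{P}^{n-1}$. Assume $\mathcal{Q}_3: Q_3=0$ is a nonsingular quadric. If $[x]\in\mathcal{R}$ and $Q=t_1Q_1+t_2Q_2$ is any nontrivial linear combination, then $Qx\neq 0$, and the hyperplane $H=\{[y]: y^TQx=0\}$ intersects $\mathcal{Q}_3$ in a quadric of rank at least $n-2$ in $\mathbb{P}^{n-2}$ for which $[x]$ is a smooth point. -/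
/-!
The nonsingularity of the system at `x` says that `A₁x, A₂x, A₃x` are linearly independent,
so any nontrivial combination `Qx = t₁A₁x + t₂A₂x` is independent of `A₃x`; in particular
`Qx ≠ 0`, and `[x]` is a smooth point of `𝒬₃ ∩ H`. The radical of `Q₃` restricted to `H`
lies in `A₃⁻¹ (span Qx)`, a line because `A₃` is invertible, so the rank drops by at most 2.
-/

open Matrix

/-- The linear functional `y ↦ y ⬝ᵥ w` on `Fin n → k`; its kernel is the hyperplane
with normal vector `w`. -/
noncomputable def dotLin {k : Type*} [CommRing k] {n : ℕ} (w : Fin n → k) :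
    (Fin n → k) →ₗ[k] k where
  toFun y := y ⬝ᵥ w
  map_add' a b := add_dotProduct a b w
  map_smul' c a := smul_dotProduct c a w

theorem Submodule.finrank_comap_le_of_injective {R M N : Type*} [Ring R] [StrongRankCondition R]
    [AddCommGroup M] [Module R M] [AddCommGroup N] [Module R N]
    {f : M →ₗ[R] N} (hf : Function.Injective f) (p : Submodule R N) [Module.Finite R p] :
    Module.finrank R (p.comap f) ≤ Module.finrank R p :=
  LinearMap.finrank_le_finrank_of_injective (f := f.restrict fun _ h ↦ h)
    fun _ _ h ↦ Subtype.ext (hf (congrArg Subtype.val h))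

theorem LinearIndependent.pair_combination {R M : Type*} [Ring R] [NoZeroDivisors R]
    [AddCommGroup M] [Module R M] {u v w : M} (huvw : LinearIndependent R ![u, v, w])
    {t₁ t₂ : R} (ht : (t₁, t₂) ≠ (0, 0)) :
    LinearIndependent R ![w, t₁ • u + t₂ • v] := by
  rw [LinearIndependent.pair_iff]
  intro s t hst
  have hcoeff := Fintype.linearIndependent_iff.mp huvw ![t * t₁, t * t₂, s] <| by
    rw [Fin.sum_univ_three, ← hst]
    simp only [cons_val_zero, cons_val_one, cons_val_two, smul_add, mul_smul]
    abel
  refine ⟨hcoeff 2, ?_⟩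
  by_contra hne
  have h₁ : t₁ = 0 := (mul_eq_zero.mp (hcoeff 0)).resolve_left hne
  have h₂ : t₂ = 0 := (mul_eq_zero.mp (hcoeff 1)).resolve_left hne
  exact ht (by rw [h₁, h₂])

theorem smooth_hyperplane_section_of_nonsingular_triple_general
    {k : Type*} [Field k] {n : ℕ}
    (A₁ A₂ A₃ : Matrix (Fin n) (Fin n) k)
    (hns : ∀ y : Fin n → k, y ≠ 0 → y ⬝ᵥ (A₁ *ᵥ y) = 0 → y ⬝ᵥ (A₂ *ᵥ y) = 0 →
      y ⬝ᵥ (A₃ *ᵥ y) = 0 → LinearIndependent k ![A₁ *ᵥ y, A₂ *ᵥ y, A₃ *ᵥ y])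
    (hdet : IsUnit A₃.det)
    (x : Fin n → k) (hx : x ≠ 0)
    (hx₁ : x ⬝ᵥ (A₁ *ᵥ x) = 0) (hx₂ : x ⬝ᵥ (A₂ *ᵥ x) = 0) (hx₃ : x ⬝ᵥ (A₃ *ᵥ x) = 0)
    (t₁ t₂ : k) (ht : (t₁, t₂) ≠ (0, 0))
    (Q : Matrix (Fin n) (Fin n) k) (hQ : Q = t₁ • A₁ + t₂ • A₂) :
    Q *ᵥ x ≠ 0 ∧
    LinearIndependent k ![A₃ *ᵥ x, Q *ᵥ x] ∧
    Module.finrank k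
      ↥(LinearMap.ker (dotLin (Q *ᵥ x)) ⊓
        Submodule.comap A₃.mulVecLin (Submodule.span k {Q *ᵥ x})) ≤ 1 := by
  have hQx : Q *ᵥ x = t₁ • (A₁ *ᵥ x) + t₂ • (A₂ *ᵥ x) := by
    rw [hQ, add_mulVec, smul_mulVec, smul_mulVec]
  have hpair : LinearIndependent k ![A₃ *ᵥ x, Q *ᵥ x] :=
    hQx ▸ (hns x hx hx₁ hx₂ hx₃).pair_combination ht
  have hQx_ne : Q *ᵥ x ≠ 0 := hpair.ne_zero 1
  have hA₃ : Function.Injective A₃.mulVecLin :=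
    mulVec_injective_iff_isUnit.mpr ((isUnit_iff_isUnit_det A₃).mpr hdet)
  refine ⟨hQx_ne, hpair, ?_⟩
  calc _ ≤ Module.finrank k ((k ∙ Q *ᵥ x).comap A₃.mulVecLin) :=
        Submodule.finrank_mono inf_le_right
    _ ≤ Module.finrank k (k ∙ Q *ᵥ x) := Submodule.finrank_comap_le_of_injective hA₃ _
    _ = 1 := finrank_span_singleton hQx_ne

/-- For a nonsingular system `Q₁, Q₂, Q₃` with `𝒬₃` a nonsingular quadric, a point
`[x] ∈ ℛ` and a nontrivial combination `Q = t₁Q₁ + t₂Q₂`: the gradient `Q *ᵥ x` is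
nonzero; `[x]` is a smooth point of the quadric `𝒬₃ ∩ H` cut out on the hyperplane
`H = {[y] : yᵀQx = 0}` (i.e. `A₃x` and `Qx` are linearly independent); and the rank of
`Q₃` restricted to `H` is at least `n - 2`, i.e. the radical
`{y ∈ H : A₃y ∈ span(Qx)}` of the restricted form has dimension at most `1`. -/
theorem smooth_hyperplane_section_of_nonsingular_triple
    {k : Type*} [Field k] [IsAlgClosed k] [CharZero k] {n : ℕ}
    (A₁ A₂ A₃ : Matrix (Fin n) (Fin n) k)
    (hA₁ : A₁.IsSymm) (hA₂ : A₂.IsSymm) (hA₃ : A₃.IsSymm)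
    (hns : ∀ y : Fin n → k, y ≠ 0 → y ⬝ᵥ (A₁ *ᵥ y) = 0 → y ⬝ᵥ (A₂ *ᵥ y) = 0 →
      y ⬝ᵥ (A₃ *ᵥ y) = 0 → LinearIndependent k ![A₁ *ᵥ y, A₂ *ᵥ y, A₃ *ᵥ y])
    (hdet : IsUnit A₃.det)
    (x : Fin n → k) (hx : x ≠ 0)
    (hx₁ : x ⬝ᵥ (A₁ *ᵥ x) = 0) (hx₂ : x ⬝ᵥ (A₂ *ᵥ x) = 0) (hx₃ : x ⬝ᵥ (A₃ *ᵥ x) = 0)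
    (t₁ t₂ : k) (ht : (t₁, t₂) ≠ (0, 0))
    (Q : Matrix (Fin n) (Fin n) k) (hQ : Q = t₁ • A₁ + t₂ • A₂) :
    Q *ᵥ x ≠ 0 ∧
    LinearIndependent k ![A₃ *ᵥ x, Q *ᵥ x] ∧
    Module.finrank k
      ↥(LinearMap.ker (dotLin (Q *ᵥ x)) ⊓
        Submodule.comap A₃.mulVecLin (Submodule.span k {Q *ᵥ x})) ≤ 1 :=
  smooth_hyperplane_section_of_nonsingular_triple_general A₁ A₂ A₃ hns hdet x hx hx₁ hx₂ hx₃ t₁ t₂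
    ht Q hQ
end
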